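/- arXiv:1512.06202 — 3 statements merged into one kernel-verified Lean document; each statement's English description precedes it below -/
import Mathlib

section
/- For every K₅-free graph G on n vertices, α₁(G) + τ_B(G) ≤ 3n²/10. -/
/-!
Let `B` be a largest vertex set inducing a bipartite subgraph, `b = |B|` and `c = n - b`.

A triangle-independent set `A` is the edge set of a graph `H` whose neighbourhoods are
independent in `G`. For an edge `uv` of `H`, the set `N_H(u) ∪ N_H(v)` therefore induces a
bipartite subgraph, so `d(u) + d(v) ≤ b`; summing over the edges of `H` and applying
Cauchy–Schwarz gives `4 α₁ ≤ n b`.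

Extend a proper 2-colouring of `G[B]` greedily, giving each new vertex the colour that is rarer
among its already coloured neighbours. At most half of the edges that meet `Bᶜ` end up
monochromatic, so `τ_B ≤ (e(B, Bᶜ) + e(Bᶜ)) / 2 ≤ (b c + 3 c² / 8) / 2`, using Turán's theorem
for the `K₅`-free graph `G[Bᶜ]`. Hence `α₁ + τ_B ≤ n b / 4 + b c / 2 + 3 c² / 16 ≤ 3 n² / 10`,
with equality at `c = 2 n / 5`.
-/

open SimpleGraph Finset

variable {V : Type*} [Fintype V] [DecidableEq V]

/-- `A` is a triangle-independent edge set of `G`: a set of edges of `G`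
containing at most one edge from each triangle of `G`. -/
def IsTriangleIndep (G : SimpleGraph V) (A : Finset (Sym2 V)) : Prop :=
  (A : Set (Sym2 V)) ⊆ G.edgeSet ∧
    ∀ a b c : V, G.Adj a b → G.Adj b c → G.Adj a c →
      ({s(a, b), s(b, c), s(a, c)} ∩ A).card ≤ 1

/-- `α₁(G)`: the maximum size of a triangle-independent set in `G`. -/
noncomputable def alphaOne (G : SimpleGraph V) : ℕ :=
  sSup {k | ∃ A : Finset (Sym2 V), IsTriangleIndep G A ∧ A.card = k}

/-- `τ_B(G)`: the minimum size of an edge set of `G` whose deletion makes `G` bipartite. -/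
noncomputable def tauB (G : SimpleGraph V) : ℕ :=
  sInf {k | ∃ D : Finset (Sym2 V), (D : Set (Sym2 V)) ⊆ G.edgeSet ∧
    (G.deleteEdges (D : Set (Sym2 V))).Colorable 2 ∧ D.card = k}

/-- `b(G)`: the maximum size of a vertex set inducing a bipartite subgraph of `G`. -/
noncomputable def bipNum (G : SimpleGraph V) : ℕ :=
  sSup {k | ∃ B : Finset V, (G.induce (B : Set V)).Colorable 2 ∧ B.card = k}

namespace SimpleGraph

variable {α : Type*}

theorem CliqueFree.two_mul_mul_card_edgeFinset_le [Fintype α] {G : SimpleGraph α}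
    [DecidableRel G.Adj] {r : ℕ} (h : G.CliqueFree (r + 1)) :
    2 * r * #G.edgeFinset ≤ (r - 1) * Fintype.card α ^ 2 := by
  rcases r.eq_zero_or_pos with rfl | hr
  · simp
  obtain ⟨H, _, hH⟩ := exists_isTuranMaximal (V := α) hr
  calc 2 * r * #G.edgeFinset ≤ 2 * r * #H.edgeFinset := Nat.mul_le_mul_left _ (hH.2 h)
    _ = 2 * r * #(turanGraph (Fintype.card α) r).edgeFinset := by
      rw [((isTuranMaximal_iff_nonempty_iso_turanGraph hr).mp hH).some.card_edgeFinset_eq]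
    _ ≤ (r - 1) * Fintype.card α ^ 2 := mul_card_edgeFinset_turanGraph_le

theorem four_mul_card_edgeFinset_le_of_degree_add_degree_le [Fintype α] (H : SimpleGraph α)
    [DecidableRel H.Adj] {b : ℕ} (hb : ∀ u v, H.Adj u v → H.degree u + H.degree v ≤ b) :
    4 * #H.edgeFinset ≤ Fintype.card α * b := by
  set m := #H.edgeFinset
  have hsum : ∑ v, H.degree v = 2 * m := sum_degrees_eq_twice_card_edges H
  have hleft : ∑ v, ∑ _w ∈ H.neighborFinset v, H.degree v = ∑ v, H.degree v ^ 2 := by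
    simp [sq]
  have hright : ∑ v, ∑ w ∈ H.neighborFinset v, H.degree w = ∑ v, H.degree v ^ 2 := by
    rw [sum_comm' (t' := univ) (s' := fun w => H.neighborFinset w) (by simp [adj_comm]), ← hleft]
  have hsq : 2 * ∑ v, H.degree v ^ 2 ≤ 2 * m * b :=
    calc 2 * ∑ v, H.degree v ^ 2
        = ∑ v, ∑ w ∈ H.neighborFinset v, (H.degree v + H.degree w) := by
          simp only [sum_add_distrib, hleft, hright, two_mul]
      _ ≤ ∑ v, ∑ _w ∈ H.neighborFinset v, b :=
          sum_le_sum fun v _ => sum_le_sum fun w hw => hb v w ((mem_neighborFinset ..).1 hw)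
      _ = 2 * m * b := by simp [← hsum, sum_mul]
  have hcs : (2 * m) ^ 2 ≤ Fintype.card α * ∑ v, H.degree v ^ 2 := by
    simpa [hsum] using sq_sum_le_card_mul_sum_sq (s := univ) (f := fun v => H.degree v)
  rcases m.eq_zero_or_pos with hm | hm
  · simp [hm]
  · exact Nat.le_of_mul_le_mul_right (by nlinarith) hm

theorem card_interedges_self (G : SimpleGraph α) [DecidableRel G.Adj] (s : Finset α) :
    #(G.interedges s s) = 2 * #(G.induce (s : Set α)).edgeFinset := by
  rw [← dart_card_eq_twice_card_edges, ← card_univ]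
  symm
  refine card_nbij (fun d => (d.fst.1, d.snd.1)) (fun d _ => ?_) (fun d _ d' _ h => ?_) ?_
  · exact G.mk_mem_interedges_iff.2 ⟨d.fst.2, d.snd.2, d.adj⟩
  · simp only [Prod.mk.injEq] at h
    exact Dart.ext _ _ (Prod.ext (Subtype.ext h.1) (Subtype.ext h.2))
  · rintro ⟨x, y⟩ h
    obtain ⟨hx, hy, hxy⟩ := G.mk_mem_interedges_iff.1 h
    exact ⟨⟨(⟨x, hx⟩, ⟨y, hy⟩), hxy⟩, mem_coe.2 (mem_univ _), rfl⟩

theorem card_interedges_univ [Fintype α] (G : SimpleGraph α) [DecidableRel G.Adj] :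
    #(G.interedges univ univ) = 2 * #G.edgeFinset := by
  rw [← dart_card_eq_twice_card_edges, ← card_univ]
  symm
  refine card_nbij Dart.toProd (fun d _ => ?_) (fun d _ d' _ h => Dart.ext _ _ h) ?_
  · exact G.mk_mem_interedges_iff.2 ⟨mem_univ _, mem_univ _, d.adj⟩
  · rintro ⟨x, y⟩ h
    exact ⟨⟨(x, y), (G.mk_mem_interedges_iff.1 h).2.2⟩, mem_coe.2 (mem_univ _), rfl⟩

def monochromatic (G : SimpleGraph α) (σ : α → Bool) : SimpleGraph α where
  Adj x y := G.Adj x y ∧ σ x = σ y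
  symm := ⟨fun _ _ h => ⟨h.1.symm, h.2.symm⟩⟩
  loopless := ⟨fun _ h => G.irrefl h.1⟩

@[simp]
theorem monochromatic_adj {G : SimpleGraph α} {σ : α → Bool} {x y : α} :
    (G.monochromatic σ).Adj x y ↔ G.Adj x y ∧ σ x = σ y :=
  Iff.rfl

theorem monochromatic_le (G : SimpleGraph α) (σ : α → Bool) : G.monochromatic σ ≤ G :=
  fun _ _ h => h.1

section

variable (G : SimpleGraph α) [DecidableRel G.Adj]

instance (σ : α → Bool) : DecidableRel (G.monochromatic σ).Adj :=
  fun _ _ => instDecidableAnd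

theorem card_interedges_comm (s t : Finset α) :
    #(G.interedges s t) = #(G.interedges t s) :=
  have := G.symm
  Rel.card_interedges_comm s t

theorem card_interedges_singleton_left (v : α) (s : Finset α) :
    #(G.interedges {v} s) = #{w ∈ s | G.Adj v w} := by
  rw [interedges_def, singleton_product, filter_map, card_map]
  rfl

theorem interedges_monochromatic_congr {σ τ : α → Bool} {s : Finset α}
    (h : ∀ x ∈ s, σ x = τ x) :
    (G.monochromatic σ).interedges s s = (G.monochromatic τ).interedges s s := by
  ext ⟨x, y⟩
  simp only [mk_mem_interedges_iff, monochromatic_adj]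
  constructor <;> rintro ⟨hx, hy, hxy, hc⟩ <;> refine ⟨hx, hy, hxy, ?_⟩
  · rwa [← h x hx, ← h y hy]
  · rwa [h x hx, h y hy]

variable [DecidableEq α]

theorem interedges_union_left (s t u : Finset α) :
    G.interedges (s ∪ t) u = G.interedges s u ∪ G.interedges t u := by
  simp only [interedges_def, union_product, filter_union]

theorem interedges_union_right (s t u : Finset α) :
    G.interedges s (t ∪ u) = G.interedges s t ∪ G.interedges s u := by
  simp only [interedges_def, product_union, filter_union]

theorem card_interedges_union_self {s t : Finset α} (h : Disjoint s t) :
    #(G.interedges (s ∪ t) (s ∪ t)) =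
      #(G.interedges s s) + 2 * #(G.interedges s t) + #(G.interedges t t) := by
  rw [interedges_union_left, card_union_of_disjoint (G.interedges_disjoint_left h _),
    interedges_union_right, interedges_union_right,
    card_union_of_disjoint (G.interedges_disjoint_right _ h),
    card_union_of_disjoint (G.interedges_disjoint_right _ h), G.card_interedges_comm t s]
  ring

theorem card_interedges_insert_self {v : α} {s : Finset α} (hv : v ∉ s) :
    #(G.interedges (insert v s) (insert v s)) =
      #(G.interedges s s) + 2 * #{w ∈ s | G.Adj v w} := by
  rw [insert_eq, card_interedges_union_self G (disjoint_singleton_left.2 hv),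
    card_interedges_singleton_left, card_interedges_singleton_left, filter_singleton,
    if_neg G.irrefl]
  simp [add_comm]

/-- The colour `c` is the one that is rarer among the neighbours of `v` in `s`. -/
theorem exists_card_interedges_monochromatic_insert_le (σ : α → Bool) {v : α} {s : Finset α}
    (hv : v ∉ s) : ∃ c : Bool,
      2 * #((G.monochromatic (Function.update σ v c)).interedges (insert v s) (insert v s)) +
          #(G.interedges s s) ≤
        2 * #((G.monochromatic σ).interedges s s) + #(G.interedges (insert v s) (insert v s)) := by
  have hnew (c : Bool) : {w ∈ s | (G.monochromatic (Function.update σ v c)).Adj v w} =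
      {w ∈ s | G.Adj v w ∧ σ w = c} :=
    filter_congr fun w hw => by simp [Function.update_of_ne (ne_of_mem_of_not_mem hw hv), eq_comm]
  have hsplit : #{w ∈ s | G.Adj v w ∧ σ w = true} + #{w ∈ s | G.Adj v w ∧ σ w = false} =
      #{w ∈ s | G.Adj v w} := by
    rw [← card_filter_add_card_filter_not (s := {w ∈ s | G.Adj v w}) (fun w => σ w = true),
      filter_filter, filter_filter]
    simp
  have hold (c : Bool) : (G.monochromatic (Function.update σ v c)).interedges s s =
      (G.monochromatic σ).interedges s s :=
    G.interedges_monochromatic_congr fun x hx =>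
      Function.update_of_ne (ne_of_mem_of_not_mem hx hv) _ σ
  simp only [card_interedges_insert_self _ hv, hnew, hold]
  by_cases h : #{w ∈ s | G.Adj v w ∧ σ w = true} ≤ #{w ∈ s | G.Adj v w ∧ σ w = false}
  · exact ⟨true, by omega⟩
  · exact ⟨false, by omega⟩

theorem exists_card_interedges_monochromatic_union_le (σ₀ : α → Bool) {s t : Finset α}
    (hst : Disjoint s t) : ∃ σ : α → Bool,
      2 * #((G.monochromatic σ).interedges (s ∪ t) (s ∪ t)) + #(G.interedges s s) ≤
        2 * #((G.monochromatic σ₀).interedges s s) + #(G.interedges (s ∪ t) (s ∪ t)) := by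
  induction t using Finset.induction_on with
  | empty => exact ⟨σ₀, by simp⟩
  | @insert v t hvt ih =>
    obtain ⟨σ, hσ⟩ := ih (hst.mono_right (subset_insert v t))
    have hv : v ∉ s ∪ t := by simp [hvt, disjoint_right.1 hst (mem_insert_self v t)]
    obtain ⟨c, hc⟩ := G.exists_card_interedges_monochromatic_insert_le σ hv
    refine ⟨Function.update σ v c, ?_⟩
    rw [union_insert]
    omega

end

end SimpleGraph

omit [Fintype V] [DecidableEq V] in
theorem tauB_le_card {G : SimpleGraph V} {D : Finset (Sym2 V)}
    (hD : (D : Set (Sym2 V)) ⊆ G.edgeSet)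
    (hcol : (G.deleteEdges (D : Set (Sym2 V))).Colorable 2) : tauB G ≤ #D :=
  Nat.sInf_le ⟨D, hD, hcol, rfl⟩

omit [DecidableEq V] in
theorem tauB_le_card_edgeFinset_monochromatic (G : SimpleGraph V) [DecidableRel G.Adj]
    (σ : V → Bool) : tauB G ≤ #(G.monochromatic σ).edgeFinset := by
  refine tauB_le_card (by simpa using edgeSet_mono (G.monochromatic_le σ)) ?_
  have C : (G.deleteEdges (G.monochromatic σ).edgeFinset).Coloring Bool :=
    Coloring.mk σ fun {_ _} h hσ =>
      (deleteEdges_adj.1 h).2 (by simpa using ⟨(deleteEdges_adj.1 h).1, hσ⟩)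
  simpa using C.colorable

theorem four_mul_tauB_le (G : SimpleGraph V) [DecidableRel G.Adj] (B : Finset V)
    (hB : (G.induce (B : Set V)).Colorable 2) :
    4 * tauB G ≤ 2 * #(G.interedges B Bᶜ) + #(G.interedges Bᶜ Bᶜ) := by
  let C : (G.induce (B : Set V)).Coloring Bool := hB.toColoring (by simp)
  let σ₀ : V → Bool := fun v => if h : v ∈ B then C ⟨v, h⟩ else false
  have hσ₀ : (G.monochromatic σ₀).interedges B B = ∅ := by
    refine eq_empty_of_forall_notMem fun ⟨x, y⟩ hxy => ?_
    obtain ⟨hx, hy, hadj, hc⟩ := (G.monochromatic σ₀).mk_mem_interedges_iff.1 hxy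
    simp only [σ₀, dif_pos hx, dif_pos hy] at hc
    exact C.valid (show (G.induce (B : Set V)).Adj ⟨x, hx⟩ ⟨y, hy⟩ from hadj) hc
  obtain ⟨σ, hσ⟩ :=
    G.exists_card_interedges_monochromatic_union_le σ₀ (disjoint_compl_right (a := B))
  have hsplit := G.card_interedges_union_self (disjoint_compl_right (a := B))
  rw [union_compl] at hσ hsplit
  rw [card_interedges_univ, hσ₀, card_empty] at hσ
  have := tauB_le_card_edgeFinset_monochromatic G σ
  omega

theorem exists_isTriangleIndep_card_eq_alphaOne (G : SimpleGraph V) :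
    ∃ A : Finset (Sym2 V), IsTriangleIndep G A ∧ #A = alphaOne G :=
  Nat.sSup_mem (s := {k | ∃ A : Finset (Sym2 V), IsTriangleIndep G A ∧ #A = k})
    ⟨0, ∅, ⟨by simp, by simp⟩, rfl⟩
    ⟨Fintype.card (Sym2 V), by rintro k ⟨A, -, rfl⟩; exact card_le_univ A⟩

omit [DecidableEq V] in
theorem bddAbove_bipNum (G : SimpleGraph V) :
    BddAbove {k | ∃ B : Finset V, (G.induce (B : Set V)).Colorable 2 ∧ #B = k} :=
  ⟨Fintype.card V, by rintro k ⟨B, -, rfl⟩; exact card_le_univ B⟩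

omit [DecidableEq V] in
theorem card_le_bipNum {G : SimpleGraph V} {B : Finset V}
    (hB : (G.induce (B : Set V)).Colorable 2) : #B ≤ bipNum G :=
  le_csSup (bddAbove_bipNum G) ⟨B, hB, rfl⟩

omit [DecidableEq V] in
theorem exists_colorable_induce_card_eq_bipNum (G : SimpleGraph V) :
    ∃ B : Finset V, (G.induce (B : Set V)).Colorable 2 ∧ #B = bipNum G :=
  Nat.sSup_mem (s := {k | ∃ B : Finset V, (G.induce (B : Set V)).Colorable 2 ∧ #B = k})
    ⟨0, ∅, by rw [coe_empty]; exact Colorable.of_isEmpty 2, rfl⟩ (bddAbove_bipNum G)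

omit [Fintype V] in
theorem IsTriangleIndep.not_adj {G : SimpleGraph V} {A : Finset (Sym2 V)}
    (hA : IsTriangleIndep G A) {u x y : V} (hx : s(u, x) ∈ A) (hy : s(u, y) ∈ A) :
    ¬G.Adj x y := by
  intro hxy
  have hux : G.Adj u x := hA.1 hx
  have huy : G.Adj u y := hA.1 hy
  refine (hA.2 x u y hux.symm huy hxy).not_gt (one_lt_card.2 ⟨s(x, u), ?_, s(u, y), ?_, ?_⟩)
  · simp [Sym2.eq_swap, hx]
  · simp [hy]
  · simp [hux.ne.symm, hxy.ne]

omit [DecidableEq V] in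
theorem degree_add_degree_le_bipNum {G H : SimpleGraph V} [DecidableRel H.Adj] (hHG : H ≤ G)
    (hH : ∀ x y z, H.Adj x y → H.Adj x z → ¬G.Adj y z) {u v : V} (huv : H.Adj u v) :
    H.degree u + H.degree v ≤ bipNum G := by
  classical
  set N := H.neighborFinset
  have hdisj : Disjoint (N u) (N v) :=
    disjoint_left.2 fun x hxu hxv =>
      hH x u v ((mem_neighborFinset ..).1 hxu).symm ((mem_neighborFinset ..).1 hxv).symm (hHG huv)
  have C : (G.induce ((N u ∪ N v : Finset V) : Set V)).Coloring Bool := by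
    refine Coloring.mk (fun x => decide ((x : V) ∈ N u)) ?_
    rintro ⟨x, hx⟩ ⟨y, hy⟩ hxy hc
    replace hxy : G.Adj x y := hxy
    rw [mem_coe, mem_union] at hx hy
    simp only [decide_eq_decide] at hc
    by_cases hxu : x ∈ N u
    · exact hH u x y ((mem_neighborFinset ..).1 hxu) ((mem_neighborFinset ..).1 (hc.1 hxu)) hxy
    · exact hH v x y ((mem_neighborFinset ..).1 (hx.resolve_left hxu))
        ((mem_neighborFinset ..).1 (hy.resolve_left (hc.not.1 hxu))) hxy
  rw [← card_neighborFinset_eq_degree, ← card_neighborFinset_eq_degree,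
    ← card_union_of_disjoint hdisj]
  exact card_le_bipNum (by simpa using C.colorable)

theorem four_mul_alphaOne_le (G : SimpleGraph V) :
    4 * alphaOne G ≤ Fintype.card V * bipNum G := by
  classical
  obtain ⟨A, hA, hcard⟩ := exists_isTriangleIndep_card_eq_alphaOne G
  let H := fromEdgeSet (A : Set (Sym2 V))
  have hHG : H ≤ G := fun x y h => hA.1 ((fromEdgeSet_adj _).1 h).1
  have h := H.four_mul_card_edgeFinset_le_of_degree_add_degree_le fun u v huv =>
    degree_add_degree_le_bipNum hHG (fun x y z hy hz =>
      hA.not_adj ((fromEdgeSet_adj _).1 hy).1 ((fromEdgeSet_adj _).1 hz).1) huv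
  rw [← hcard]
  convert h using 3
  ext e
  simp only [H, mem_edgeFinset, edgeSet_fromEdgeSet, Set.mem_sdiff, mem_coe, Sym2.mem_diagSet]
  exact ⟨fun he => ⟨he, G.not_isDiag_of_mem_edgeSet (hA.1 he)⟩, And.left⟩

/-- For every `K₅`-free graph `G` on `n` vertices, `α₁(G) + τ_B(G) ≤ 3 n² / 10`. -/
theorem alphaOne_add_tauB_le_of_cliqueFree_five (G : SimpleGraph V) (h5 : G.CliqueFree 5) :
    (alphaOne G + tauB G : ℝ) ≤ 3 * (Fintype.card V : ℝ) ^ 2 / 10 := by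
  classical
  obtain ⟨B, hB, hcard⟩ := exists_colorable_induce_card_eq_bipNum G
  have hα := four_mul_alphaOne_le G
  have hτ := four_mul_tauB_le G B hB
  have hcross := G.card_interedges_le_mul B Bᶜ
  have hturan : 4 * #(G.interedges Bᶜ Bᶜ) ≤ 3 * #Bᶜ ^ 2 := by
    have := ((cliqueFree_induce_iff G ((Bᶜ : Finset V) : Set V) 5).2
      h5.cliqueFreeOn).two_mul_mul_card_edgeFinset_le
    simp only [coe_sort_coe, Fintype.card_coe] at this
    rw [card_interedges_self]
    omega
  have hn := card_add_card_compl B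
  rw [← hcard, ← hn] at hα
  -- `80 (α₁ + τ_B) ≤ 20 n b + 40 b c + 15 c² = 24 n² - (2 b - 3 c)²`
  have key : 10 * (alphaOne G + tauB G) ≤ 3 * Fintype.card V ^ 2 := by
    rw [← hn]
    zify at hα hτ hcross hturan ⊢
    nlinarith [sq_nonneg (2 * (#B : ℤ) - 3 * #Bᶜ)]
  rw [le_div_iff₀ (by norm_num), mul_comm]
  exact_mod_cast key
end

section
/- For every graph G on n vertices, τ_B(G) ≤ (n² − b(G)²)/4. -/
open SimpleGraph Finset

variable {V : Type*} [Fintype V] [DecidableEq V]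

open scoped Classical in
noncomputable def monoD (G : SimpleGraph V) (S : Finset V) (f : V → Bool) : Finset (Sym2 V) :=
  Finset.univ.filter (fun e : Sym2 V => e ∈ G.edgeSet ∧ Sym2.IsDiag (e.map f) ∧ ∀ x ∈ e, x ∈ S)

lemma mem_monoD {G : SimpleGraph V} {S : Finset V} {f : V → Bool} {a b : V} :
    s(a, b) ∈ monoD G S f ↔ G.Adj a b ∧ f a = f b ∧ a ∈ S ∧ b ∈ S := by
  simp [monoD, Sym2.map_pair_eq, Sym2.mk_isDiag_iff, Sym2.mem_iff, and_assoc]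

lemma key (G : SimpleGraph V) (B : Finset V) (fB : V → Bool)
    (hB : ∀ a b, a ∈ B → b ∈ B → G.Adj a b → fB a ≠ fB b) :
    ∀ k : ℕ, ∀ S : Finset V, B ⊆ S → S.card = B.card + k →
      ∃ f : V → Bool, 4 * (monoD G S f).card ≤ k * (S.card + B.card - 1) := by
  classical
  intro k
  induction k with
  | zero =>
    intro S hBS hcard
    refine ⟨fB, ?_⟩
    have hSB : S = B := (Finset.eq_of_subset_of_card_le hBS (by omega)).symm
    subst hSB
    have : monoD G S fB = ∅ := by
      ext e
      refine e.ind (fun a b => ?_)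
      simp only [mem_monoD, Finset.notMem_empty, iff_false]
      rintro ⟨hadj, hf, ha, hb⟩
      exact hB a b ha hb hadj hf
    simp [this]
  | succ k ih =>
    intro S hBS hcard
    have hlt : B.card < S.card := by omega
    have hns : ¬ S ⊆ B := fun h => absurd (Finset.card_le_card h) (by omega)
    obtain ⟨v, hvS, hvB⟩ := Finset.not_subset.1 hns
    set S' := S.erase v with hS'
    have hBS' : B ⊆ S' := Finset.subset_erase.2 ⟨hBS, hvB⟩
    have hcard' : S'.card = B.card + k := by
      rw [hS', Finset.card_erase_of_mem hvS]
      omega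
    obtain ⟨f, hf⟩ := ih S' hBS' hcard'
    -- choose color for v
    set N : Bool → ℕ := fun c => (S'.filter (fun w => G.Adj v w ∧ f w = c)).card with hN
    set c : Bool := if N false ≤ N true then false else true with hc
    have hNc : 2 * N c ≤ S'.card := by
      have hdisj : Disjoint (S'.filter (fun w => G.Adj v w ∧ f w = false))
          (S'.filter (fun w => G.Adj v w ∧ f w = true)) := by
        rw [Finset.disjoint_left]
        intro w h0 h1
        simp only [Finset.mem_filter] at h0 h1
        simp [h0.2.2] at h1
      have hsum : N false + N true ≤ S'.card := by
        rw [hN]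
        calc (S'.filter _).card + (S'.filter _).card
            = ((S'.filter (fun w => G.Adj v w ∧ f w = false)) ∪
               (S'.filter (fun w => G.Adj v w ∧ f w = true))).card :=
              (Finset.card_union_of_disjoint hdisj).symm
          _ ≤ S'.card := Finset.card_le_card (Finset.union_subset
              (Finset.filter_subset _ _) (Finset.filter_subset _ _))
      by_cases h : N false ≤ N true <;> simp only [hc, h, if_true, if_false] <;> omega
    set f' : V → Bool := Function.update f v c with hf'
    have hvS' : v ∉ S' := Finset.notMem_erase _ _
    have hsub : monoD G S f' ⊆ monoD G S' f ∪
        (S'.filter (fun w => G.Adj v w ∧ f w = c)).image (fun w => s(v, w)) := by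
      intro e
      refine e.ind (fun a b => ?_) 
      rw [mem_monoD]
      rintro ⟨hadj, hfe, haS, hbS⟩
      by_cases hav : a = v
      · subst hav
        have hbv : b ≠ a := (G.ne_of_adj hadj).symm
        refine Finset.mem_union_right _ (Finset.mem_image.2 ⟨b, ?_, rfl⟩)
        refine Finset.mem_filter.2 ⟨Finset.mem_erase.2 ⟨hbv, hbS⟩, hadj, ?_⟩
        have h1 : f' a = c := Function.update_self _ _ _
        have h2 : f' b = f b := Function.update_of_ne hbv _ _
        rw [h1, h2] at hfe; exact hfe.symm
      · by_cases hbv : b = v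
        · subst hbv
          refine Finset.mem_union_right _ (Finset.mem_image.2 ⟨a, ?_, Sym2.eq_swap⟩)
          refine Finset.mem_filter.2 ⟨Finset.mem_erase.2 ⟨hav, haS⟩, hadj.symm, ?_⟩
          have h1 : f' b = c := Function.update_self _ _ _
          have h2 : f' a = f a := Function.update_of_ne hav _ _
          rw [h1, h2] at hfe; exact hfe
        · refine Finset.mem_union_left _ ?_
          rw [mem_monoD]
          have h1 : f' a = f a := Function.update_of_ne hav _ _
          have h2 : f' b = f b := Function.update_of_ne hbv _ _
          exact ⟨hadj, by rw [h1, h2] at hfe; exact hfe,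
            Finset.mem_erase.2 ⟨hav, haS⟩, Finset.mem_erase.2 ⟨hbv, hbS⟩⟩
    refine ⟨f', ?_⟩
    have hcardle : (monoD G S f').card ≤ (monoD G S' f).card + N c := by
      calc (monoD G S f').card ≤ _ := Finset.card_le_card hsub
        _ ≤ (monoD G S' f).card +
            ((S'.filter (fun w => G.Adj v w ∧ f w = c)).image (fun w => s(v, w))).card :=
          Finset.card_union_le _ _
        _ ≤ (monoD G S' f).card + N c := by
          gcongr
          exact Finset.card_image_le
    -- arithmetic
    have hb : B.card ≤ S'.card := Finset.card_le_card hBS'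
    have hScard : S.card = S'.card + 1 := by omega
    rw [hScard]
    set b := B.card
    set s' := S'.card
    rcases Nat.eq_zero_or_pos (s' + b) with h0 | hpos
    · have hs0 : s' = 0 := by omega
      have hb0 : b = 0 := by omega
      have : k = 0 := by omega
      subst this
      have : N c = 0 := by omega
      have : (monoD G S f').card = 0 := by omega
      simp [this]
    · obtain ⟨m, hm⟩ : ∃ m, s' + b = m + 1 := ⟨s' + b - 1, by omega⟩
      have h1 : 4 * (monoD G S f').card ≤ k * (s' + b - 1) + 2 * s' + 2 * N c + (2 * s' - 2 * N c) := by
        omega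
      have h2 : s' + 1 + b - 1 = m + 1 := by omega
      rw [h2]
      have h3 : s' + b - 1 = m := by omega
      rw [h3] at hf
      have hk : s' = b + k := by omega
      nlinarith [hf, hNc, hcardle]

/-- For every graph `G` on `n` vertices, `τ_B(G) ≤ (n² - b(G)²)/4`. -/
theorem tauB_le (G : SimpleGraph V) :
    (tauB G : ℝ) ≤ ((Fintype.card V : ℝ) ^ 2 - (bipNum G : ℝ) ^ 2) / 4 := by
  classical
  -- bipNum is attained
  have hne : {k | ∃ B : Finset V, (G.induce (B : Set V)).Colorable 2 ∧ B.card = k}.Nonempty := by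
    refine ⟨0, ∅, ?_, by simp⟩
    have he : IsEmpty (((∅ : Finset V) : Set V)) := by simp
    exact ⟨⟨fun v => isEmptyElim v, fun {a b} h => isEmptyElim a⟩⟩
  have hbdd : BddAbove {k | ∃ B : Finset V, (G.induce (B : Set V)).Colorable 2 ∧ B.card = k} := by
    refine ⟨Fintype.card V, ?_⟩
    rintro k ⟨B, -, rfl⟩
    exact B.card_le_univ
  obtain ⟨B, hcol, hcard⟩ := Nat.sSup_mem hne hbdd
  obtain ⟨C⟩ := hcol
  set fB : V → Bool := fun v => if h : v ∈ B then decide (C ⟨v, by exact_mod_cast h⟩ = 0) else false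
    with hfB
  have hB : ∀ a b, a ∈ B → b ∈ B → G.Adj a b → fB a ≠ fB b := by
    intro a b ha hb hadj
    have hCC : C ⟨a, by exact_mod_cast ha⟩ ≠ C ⟨b, by exact_mod_cast hb⟩ := by
      exact C.valid (by exact hadj)
    simp only [hfB, ha, hb, dif_pos]
    revert hCC
    generalize C ⟨a, _⟩ = x
    generalize C ⟨b, _⟩ = y
    fin_cases x <;> fin_cases y <;> simp
  have hble : B.card ≤ Fintype.card V := B.card_le_univ
  obtain ⟨f, hf⟩ := key G B fB hB (Fintype.card V - B.card) Finset.univ (Finset.subset_univ _)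
    (by rw [Finset.card_univ]; omega)
  set D := monoD G Finset.univ f with hD
  have hDsub : (D : Set (Sym2 V)) ⊆ G.edgeSet := by
    intro e he
    rw [Finset.mem_coe, hD, monoD, Finset.mem_filter] at he
    exact he.2.1
  have hDcol : (G.deleteEdges (D : Set (Sym2 V))).Colorable 2 := by
    have C2 : (G.deleteEdges (D : Set (Sym2 V))).Coloring Bool := by
      refine ⟨f, ?_⟩
      intro a b hadj hfab
      rw [SimpleGraph.deleteEdges_adj] at hadj
      exact hadj.2 (Finset.mem_coe.2 (mem_monoD.2
        ⟨hadj.1, hfab, Finset.mem_univ _, Finset.mem_univ _⟩))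
    simpa using C2.colorable
  have htau : tauB G ≤ D.card := Nat.sInf_le ⟨D, hDsub, hDcol, rfl⟩
  -- arithmetic
  set n := Fintype.card V
  set b := B.card
  rw [Finset.card_univ] at hf
  have h4 : 4 * D.card ≤ (n - b) * (n + b) :=
    le_trans hf (Nat.mul_le_mul_left _ (Nat.sub_le _ _))
  have h4R : (4 : ℝ) * D.card ≤ ((n : ℝ) - b) * ((n : ℝ) + b) := by
    calc (4 : ℝ) * D.card = ((4 * D.card : ℕ) : ℝ) := by push_cast; ring
      _ ≤ (((n - b) * (n + b) : ℕ) : ℝ) := by exact_mod_cast h4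
      _ = ((n : ℝ) - b) * ((n : ℝ) + b) := by
          push_cast [Nat.cast_sub hble]
          ring
  have htauR : (tauB G : ℝ) ≤ D.card := by exact_mod_cast htau
  rw [show bipNum G = b from hcard.symm]
  nlinarith [htauR, h4R]
end

section
/- Let m ≥ 1 and let G be a 2m-partite graph (i.e., a graph whose chromatic number is at most 2m) with e edges. Then τ_B(G) ≤ (m−1)·e/(2m−1). -/
open SimpleGraph Finset

variable {V : Type*} [Fintype V] [DecidableEq V]

/-!
Colour `G` properly with `2m` colours and split the colours into two halves `S`, `Sᶜ` of size `m`;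
deleting the edges lying inside a half leaves a bipartite graph. The two (distinct) colours of an
edge land in the same half for exactly a fraction `(m - 1) / (2m - 1)` of the choices of `S`, so
averaging over `S` yields a split that deletes at most `(m - 1) e / (2m - 1)` edges.
-/

lemma Nat.two_mul_choose_mul_two_mul_sub_one (m : ℕ) :
    2 * (2 * m - 2).choose m * (2 * m - 1) = (m - 1) * (2 * m).choose m := by
  rcases m with _ | n
  · simp
  have hsucc : (2 * n).choose (n + 1) * (n + 1) = (2 * n).choose n * n := by
    simpa [show 2 * n - n = n by omega] using Nat.choose_succ_right_eq (2 * n) n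
  have hmid : (2 * n + 2).choose (n + 1) = 2 * (2 * n).choose n + 2 * (2 * n).choose (n + 1) := by
    rw [Nat.choose_succ_succ', ← Nat.choose_symm_half, Nat.choose_succ_succ']
    ring
  rw [show 2 * (n + 1) - 1 = 2 * n + 1 by omega, show 2 * (n + 1) = 2 * n + 2 by ring, hmid,
    Nat.add_sub_cancel, Nat.add_sub_cancel_right]
  linear_combination 2 * hsucc

section PowersetCard

variable {α : Type*} [Fintype α] [DecidableEq α]

lemma card_powersetCard_filter_notMem_notMem (k : ℕ) {i j : α} (hij : i ≠ j) :
    #{S ∈ powersetCard k (univ : Finset α) | i ∉ S ∧ j ∉ S} = (Fintype.card α - 2).choose k := by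
  have hS : {S ∈ powersetCard k (univ : Finset α) | i ∉ S ∧ j ∉ S} = powersetCard k {i, j}ᶜ := by
    ext S
    simp only [mem_filter, mem_powersetCard, subset_univ, true_and,
      subset_compl_iff_disjoint_right, disjoint_insert_right, disjoint_singleton_right]
    tauto
  rw [hS, card_powersetCard, card_compl, card_pair hij]

lemma card_powersetCard_filter_mem_mem_eq_notMem_notMem {m : ℕ} (hα : Fintype.card α = 2 * m)
    (i j : α) :
    #{S ∈ powersetCard m (univ : Finset α) | i ∈ S ∧ j ∈ S} =
      #{S ∈ powersetCard m (univ : Finset α) | i ∉ S ∧ j ∉ S} := by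
  have hcompl : ∀ S : Finset α, #S = m → #Sᶜ = m := fun S hS ↦ by
    rw [card_compl, hα, hS]; omega
  exact card_nbij' compl compl (fun S hS ↦ by simp_all) (fun S hS ↦ by simp_all)
    (fun S _ ↦ compl_compl S) (fun S _ ↦ compl_compl S)

lemma card_powersetCard_filter_mem_iff_mem_mul {m : ℕ} (hα : Fintype.card α = 2 * m) {i j : α}
    (hij : i ≠ j) :
    #{S ∈ powersetCard m (univ : Finset α) | i ∈ S ↔ j ∈ S} * (2 * m - 1) =
      (m - 1) * (2 * m).choose m := by
  have hsplit : {S ∈ powersetCard m (univ : Finset α) | i ∈ S ↔ j ∈ S} =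
      {S ∈ powersetCard m (univ : Finset α) | i ∈ S ∧ j ∈ S} ∪
        {S ∈ powersetCard m (univ : Finset α) | i ∉ S ∧ j ∉ S} := by
    rw [← filter_or]
    exact filter_congr fun S _ ↦ by tauto
  rw [hsplit, card_union_of_disjoint (disjoint_filter.2 fun _ _ h h' ↦ h'.1 h.1),
    card_powersetCard_filter_mem_mem_eq_notMem_notMem hα,
    card_powersetCard_filter_notMem_notMem m hij, hα, ← two_mul, ← Nat.two_mul_choose_mul_two_mul_sub_one]

end PowersetCard

namespace SimpleGraph

variable {W : Type*} [Fintype W] (G : SimpleGraph W) [DecidableRel G.Adj]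

def uncutEdges (f : W → Bool) : Finset (Sym2 W) :=
  {e ∈ G.edgeFinset | (e.map f).IsDiag}

lemma tauB_le_card_uncutEdges (f : W → Bool) : tauB G ≤ #(G.uncutEdges f) := by
  refine Nat.sInf_le ⟨_, fun e he ↦ mem_edgeFinset.1 (mem_filter.1 he).1, ?_, rfl⟩
  refine (Coloring.mk f fun {u v} huv hf ↦ ?_).colorable
  rw [deleteEdges_adj] at huv
  exact huv.2 (mem_filter.2 ⟨mem_edgeFinset.2 huv.1, by simp [hf]⟩)

lemma exists_card_uncutEdges_mul_le {α : Type*} [Fintype α] [DecidableEq α] {m : ℕ}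
    (hα : Fintype.card α = 2 * m) (c : G.Coloring α) :
    ∃ S : Finset α, #(G.uncutEdges fun v ↦ c v ∈ S) * (2 * m - 1) ≤ (m - 1) * #G.edgeFinset := by
  set 𝒮 := powersetCard m (univ : Finset α)
  have hcount : ∀ e ∈ G.edgeFinset, #{S ∈ 𝒮 | (e.map fun v ↦ decide (c v ∈ S)).IsDiag} *
      (2 * m - 1) = (m - 1) * (2 * m).choose m := by
    intro e he
    induction e using Sym2.ind with
    | _ u v =>
      simp only [Sym2.map_mk, Sym2.mk_isDiag_iff, decide_eq_decide]
      exact card_powersetCard_filter_mem_iff_mem_mul hα (c.valid (mem_edgeFinset.1 he))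
  have hdouble : ∑ S ∈ 𝒮, #(G.uncutEdges fun v ↦ c v ∈ S) =
      ∑ e ∈ G.edgeFinset, #{S ∈ 𝒮 | (e.map fun v ↦ decide (c v ∈ S)).IsDiag} :=
    sum_card_bipartiteAbove_eq_sum_card_bipartiteBelow _
  have hsum : ∑ S ∈ 𝒮, #(G.uncutEdges fun v ↦ c v ∈ S) * (2 * m - 1) =
      ∑ _S ∈ 𝒮, (m - 1) * #G.edgeFinset := by
    rw [← sum_mul, hdouble, sum_mul, sum_congr rfl hcount, sum_const, sum_const,
      card_powersetCard, card_univ, hα, smul_eq_mul, smul_eq_mul]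
    ring
  have h𝒮 : 𝒮.Nonempty := powersetCard_nonempty.2 (by rw [card_univ, hα]; omega)
  obtain ⟨S, -, hS⟩ := exists_le_of_sum_le h𝒮 hsum.le
  exact ⟨S, hS⟩

end SimpleGraph

/-- If `m ≥ 1` and `G` is a `2m`-partite graph (chromatic number at most `2m`) with `e`
edges, then `τ_B(G) ≤ (m - 1) e / (2m - 1)`. -/
theorem tauB_le_of_colorable (m : ℕ) (hm : 1 ≤ m) (G : SimpleGraph V) [DecidableRel G.Adj]
    (hcol : G.Colorable (2 * m)) :
    (tauB G : ℝ) ≤ ((m : ℝ) - 1) * (G.edgeFinset.card : ℝ) / (2 * (m : ℝ) - 1) := by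
  obtain ⟨c⟩ := hcol
  obtain ⟨S, hS⟩ := G.exists_card_uncutEdges_mul_le (Fintype.card_fin _) c
  have hnat : tauB G * (2 * m - 1) ≤ (m - 1) * #G.edgeFinset :=
    (Nat.mul_le_mul_right _ (G.tauB_le_card_uncutEdges _)).trans hS
  have hreal : (tauB G : ℝ) * (2 * m - 1) ≤ (m - 1) * #G.edgeFinset := by
    have := (Nat.cast_le (α := ℝ)).2 hnat
    push_cast [Nat.cast_sub hm, Nat.cast_sub (show 1 ≤ 2 * m by omega)] at this
    exact this
  have hpos : (0 : ℝ) < 2 * m - 1 := by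
    have : (1 : ℝ) ≤ m := by exact_mod_cast hm
    linarith
  rwa [le_div_iff₀ hpos]
end
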